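/- Let q be a power of an odd prime p. Then there exist q + 1 pairwise mutually unbiased orthonormal bases of ℂ^q; namely, the standard basis together with the q bases B_a = {q^{-1/2}(ω_p^{tr(a x² + b x)})_{x ∈ F_q} : b ∈ F_q} for a ∈ F_q. -/

import Mathlib

open scoped InnerProductSpace

/-- The vector `v_{a,b} = q^{-1/2} (ω_p^{tr(a x² + b x)})_{x ∈ F_q}` of `ℂ^q`,
where `ω_p = exp(2πi/p)` and `tr` is the absolute trace from `F_q` to `F_p`. -/
noncomputable def v (p : ℕ) (F : Type) [Field F] [Fintype F] [Algebra (ZMod p) F]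
    (a b : F) : EuclideanSpace ℂ F :=
  WithLp.toLp 2 fun x => (1 / Real.sqrt (Fintype.card F) : ℂ) *
    Complex.exp (2 * Real.pi * Complex.I *
      (ZMod.val (Algebra.trace (ZMod p) F (a * x ^ 2 + b * x)) : ℂ) / p)

/-- The family consisting of the standard basis (index `none`) and the bases
`B_a` for `a ∈ F_q` (index `some a`). -/
noncomputable def W (p : ℕ) (F : Type) [Field F] [Fintype F] [DecidableEq F] [Algebra (ZMod p) F] :
    Option F → F → EuclideanSpace ℂ F
  | none => fun y => EuclideanSpace.single y (1 : ℂ)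
  | some a => fun b => v p F a b

/-!
Let `ψ x = ω_p ^ tr x`; it is a primitive additive character of `F_q`, and the vectors of `B_a`
are `q^{-1/2} ψ (a x² + b x)`. Orthonormality of `B_a` is orthogonality of the characters
`x ↦ ψ (b x)`, and `|ψ| = 1` makes every `B_a` unbiased to the standard basis. For `a ≠ a'` the
inner product is `q⁻¹ S` with `S = ∑ₓ ψ (Q x)`, `Q x = c x² + d x`, `c = a' - a ≠ 0`.
Substituting `x = u + y` in `|S|² = ∑_{x,y} ψ (Q x - Q y)` gives `∑ᵤ ψ (Q u) ∑_y ψ (2 c u y)`;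
as `p` is odd, `2 c` is invertible, so only `u = 0` survives and `|S|² = q`.
-/

open Finset ComplexConjugate

theorem Orthonormal.exists_orthonormalBasis_coe_eq {𝕜 E ι : Type*} [RCLike 𝕜]
    [NormedAddCommGroup E] [InnerProductSpace 𝕜 E] [FiniteDimensional 𝕜 E] [Fintype ι]
    {v : ι → E} (hv : Orthonormal 𝕜 v) (card_ι : Module.finrank 𝕜 E = Fintype.card ι) :
    ∃ B : OrthonormalBasis ι 𝕜 E, ⇑B = v := by
  obtain ⟨B, hB⟩ := Orthonormal.exists_orthonormalBasis_extension_of_card_eq card_ι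
    (s := Set.univ) (hv.comp _ Subtype.val_injective)
  exact ⟨B, funext fun i => hB i (Set.mem_univ i)⟩

theorem AddChar.norm_sum_quadratic_sq {R : Type*} [CommRing R] [Fintype R]
    {ψ : AddChar R ℂ} (hψ : ψ.IsPrimitive) {c : R} (hc : IsUnit (2 * c)) (d : R) :
    ‖∑ x, ψ (c * x ^ 2 + d * x)‖ ^ 2 = Fintype.card R := by
  classical
  set f : R → ℂ := fun x => ψ (c * x ^ 2 + d * x)
  have shift (y u : R) : conj (f y) * f (u + y) = f u * ψ (y * (2 * c * u)) := by
    simp only [f, ← AddChar.map_neg_eq_conj, ← AddChar.map_add_eq_mul]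
    ring_nf
  suffices (∑ y, conj (f y)) * ∑ x, f x = Fintype.card R by
    rw [← map_sum, Complex.conj_mul'] at this
    exact_mod_cast this
  calc (∑ y, conj (f y)) * ∑ x, f x = ∑ y, ∑ u, conj (f y) * f (u + y) := by
        simp only [sum_mul_sum]
        exact sum_congr rfl fun y _ =>
          (Equiv.sum_comp (Equiv.addRight y) (fun x => conj (f y) * f x)).symm
    _ = ∑ u, f u * ∑ y, ψ (y * (2 * c * u)) := by
        simp only [shift, mul_sum]
        exact sum_comm
    _ = ∑ u, f u * if u = 0 then (Fintype.card R : ℂ) else 0 := by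
        simp only [AddChar.sum_mulShift _ hψ, hc.mul_right_eq_zero, apply_ite, Nat.cast_zero]
    _ = Fintype.card R := by simp [f]

theorem two_ne_zero_of_algebra_zmod {p : ℕ} [Fact p.Prime] (hp : Odd p) (F : Type*) [Ring F]
    [Nontrivial F] [Algebra (ZMod p) F] : (2 : F) ≠ 0 := by
  have : CharP F p := charP_of_injective_algebraMap' (ZMod p) p
  refine Ring.two_ne_zero ?_
  rw [ringChar.eq F p]
  rintro rfl
  exact (Nat.not_odd_iff_even.mpr even_two) hp

noncomputable def traceChar (p : ℕ) [NeZero p] (F : Type*) [Field F] [Algebra (ZMod p) F] :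
    AddChar F ℂ :=
  ZMod.stdAddChar.compAddMonoidHom (Algebra.trace (ZMod p) F).toAddMonoidHom

section
variable (p : ℕ) [Fact p.Prime] (F : Type) [Field F] [Fintype F] [Algebra (ZMod p) F]

theorem isPrimitive_traceChar : (traceChar p F).IsPrimitive := by
  refine AddChar.IsPrimitive.of_ne_one (AddChar.ne_one_iff.2 ?_)
  obtain ⟨x, hx⟩ := Algebra.trace_surjective (ZMod p) F 1
  refine ⟨x, ?_⟩
  rw [traceChar, AddChar.compAddMonoidHom_apply, LinearMap.toAddMonoidHom_coe, hx,
    ← (ZMod.stdAddChar (N := p)).map_zero_eq_one]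
  exact ZMod.injective_stdAddChar.ne one_ne_zero

theorem v_apply (a b x : F) :
    v p F a b x = (1 / Real.sqrt (Fintype.card F) : ℂ) * traceChar p F (a * x ^ 2 + b * x) := by
  rw [traceChar, AddChar.compAddMonoidHom_apply, ZMod.stdAddChar_apply, ZMod.toCircle_apply]
  rfl

theorem norm_v_apply (a b x : F) : ‖v p F a b x‖ = 1 / Real.sqrt (Fintype.card F) := by
  rw [v_apply, norm_mul, AddChar.norm_apply, mul_one, norm_div, norm_one, Complex.norm_real,
    Real.norm_of_nonneg (Real.sqrt_nonneg _)]

theorem inner_v_v (a b a' b' : F) :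
    ⟪v p F a b, v p F a' b'⟫_ℂ =
      (Fintype.card F : ℂ)⁻¹ * ∑ x, traceChar p F ((a' - a) * x ^ 2 + (b' - b) * x) := by
  have scale : (1 / Real.sqrt (Fintype.card F) : ℂ) * conj (1 / Real.sqrt (Fintype.card F) : ℂ)
      = (Fintype.card F : ℂ)⁻¹ := by
    rw [map_div₀, map_one, Complex.conj_ofReal, div_mul_div_comm, one_mul, ← Complex.ofReal_mul,
      Real.mul_self_sqrt (Nat.cast_nonneg _), Complex.ofReal_natCast, one_div]
  rw [PiLp.inner_apply, mul_sum]
  refine sum_congr rfl fun x _ => ?_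
  rw [RCLike.inner_apply, v_apply, v_apply, map_mul, mul_mul_mul_comm, scale,
    ← AddChar.map_neg_eq_conj, ← AddChar.map_add_eq_mul]
  ring_nf

theorem orthonormal_v (a : F) : Orthonormal ℂ (v p F a) := by
  classical
  rw [orthonormal_iff_ite]
  intro b b'
  simp only [inner_v_v, sub_self, zero_mul, zero_add]
  simp_rw [mul_comm (b' - b)]
  rw [AddChar.sum_mulShift _ (isPrimitive_traceChar p F)]
  simp only [sub_eq_zero, eq_comm (a := b')]
  split_ifs
  · exact inv_mul_cancel₀ (Nat.cast_ne_zero.2 Fintype.card_ne_zero)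
  · simp

theorem norm_inner_single_v_sq [DecidableEq F] (a b y : F) :
    ‖⟪EuclideanSpace.single y (1 : ℂ), v p F a b⟫_ℂ‖ ^ 2 = 1 / Fintype.card F := by
  rw [EuclideanSpace.inner_single_left, map_one, one_mul, norm_v_apply, div_pow, one_pow,
    Real.sq_sqrt (Nat.cast_nonneg _)]

theorem norm_inner_v_v_sq (hp : Odd p) {a a' : F} (ha : a ≠ a') (b b' : F) :
    ‖⟪v p F a b, v p F a' b'⟫_ℂ‖ ^ 2 = 1 / Fintype.card F := by
  have hc : IsUnit (2 * (a' - a)) :=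
    (mul_ne_zero (two_ne_zero_of_algebra_zmod hp F) (sub_ne_zero.2 ha.symm)).isUnit
  rw [inner_v_v, norm_mul, mul_pow, AddChar.norm_sum_quadratic_sq (isPrimitive_traceChar p F) hc,
    norm_inv, Complex.norm_natCast]
  field_simp

end

/-- For `q` a power of an odd prime `p`, the standard basis together with the `q`
bases `B_a`, `a ∈ F_q`, form `q + 1` pairwise mutually unbiased orthonormal
bases of `ℂ^q`. -/
theorem exists_q_add_one_mubs (p : ℕ) [Fact p.Prime] (hp : Odd p)
    (F : Type) [Field F] [Fintype F] [DecidableEq F] [Algebra (ZMod p) F] :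
    Fintype.card (Option F) = Fintype.card F + 1 ∧
    (∀ o : Option F,
      ∃ B : OrthonormalBasis F ℂ (EuclideanSpace ℂ F), ∀ b : F, B b = W p F o b) ∧
    (∀ o o' : Option F, o ≠ o' → ∀ b b' : F,
      ‖⟪W p F o b, W p F o' b'⟫_ℂ‖ ^ 2 = 1 / Fintype.card F) := by
  refine ⟨Fintype.card_option, ?_, ?_⟩
  · rintro (_ | a)
    · exact ⟨EuclideanSpace.basisFun F ℂ, fun b => by simp [W]⟩
    · obtain ⟨B, hB⟩ := (orthonormal_v p F a).exists_orthonormalBasis_coe_eq finrank_euclideanSpace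
      exact ⟨B, congrFun hB⟩
  · rintro (_ | a) (_ | a') hne b b'
    · exact absurd rfl hne
    · exact norm_inner_single_v_sq p F a' b' b
    · rw [← norm_inner_symm]
      exact norm_inner_single_v_sq p F a b b'
    · exact norm_inner_v_v_sq p F hp (fun h => hne (congrArg some h)) b b'
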